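/- For probability vectors p and q, p ⊗ q ⪯ p (with p padded by zeros): the sum of the k largest entries of p ⊗ q is at most the sum of the k largest entries of p, for every k. -/
import Mathlib

open Finset Kronecker ComplexOrder

/-- Non-increasing rearrangement of `p`. -/
noncomputable def sortDesc {n : ℕ} (p : Fin n → ℝ) : Fin n → ℝ :=
  fun i => p (Tuple.sort p i.rev)

/-- Sum of the `k` largest entries of `p`. -/
noncomputable def partialSum {n : ℕ} (p : Fin n → ℝ) (k : ℕ) : ℝ :=
  ∑ i ∈ Finset.univ.filter (fun i : Fin n => (i : ℕ) < k), sortDesc p i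

/-- `p ⪯ q`: `p` is majorized by `q`. -/
noncomputable def MajorizedBy {n : ℕ} (p q : Fin n → ℝ) : Prop :=
  (∀ k : ℕ, partialSum p k ≤ partialSum q k) ∧ (∑ i, p i = ∑ i, q i)

def IsProbVec {n : ℕ} (p : Fin n → ℝ) : Prop :=
  (∀ i, 0 ≤ p i) ∧ ∑ i, p i = 1

/-- Tensor (Kronecker) product of vectors. -/
def tensorVec {d e : ℕ} (p : Fin d → ℝ) (q : Fin e → ℝ) : Fin (d * e) → ℝ :=
  fun k => p (finProdFinEquiv.symm k).1 * q (finProdFinEquiv.symm k).2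

/-- Pad a vector with trailing zeros. -/
def padVec {d m : ℕ} (p : Fin d → ℝ) : Fin m → ℝ :=
  fun i => if h : (i : ℕ) < d then p ⟨i, h⟩ else 0

def DoublyStochastic {ι : Type*} [Fintype ι] (M : Matrix ι ι ℝ) : Prop :=
  (∀ i j, 0 ≤ M i j) ∧ (∀ i, ∑ j, M i j = 1) ∧ (∀ j, ∑ i, M i j = 1)

def IsDensityMatrix {ι : Type*} [Fintype ι] [DecidableEq ι] (ρ : Matrix ι ι ℂ) : Prop :=
  ρ.PosSemidef ∧ ρ.trace = 1

def IsPOVM {ι : Type*} [Fintype ι] [DecidableEq ι] {d : ℕ} (F : Fin d → Matrix ι ι ℂ) : Prop :=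
  (∀ a, (F a).PosSemidef) ∧ ∑ a, F a = 1

/-- Outcome distribution of POVM `F` on state `ρ`. -/
noncomputable def outDist {ι : Type*} [Fintype ι] [DecidableEq ι] {d : ℕ}
    (F : Fin d → Matrix ι ι ℂ) (ρ : Matrix ι ι ℂ) : Fin d → ℝ :=
  fun a => (Matrix.trace (F a * ρ)).re

/- ===== auxiliary lemmas ===== -/

lemma strictMono_le_apply {m n : ℕ} {φ : Fin m → Fin n} (h : StrictMono φ) (j : Fin m) :
    (j : ℕ) ≤ (φ j : ℕ) := by
  obtain ⟨j, hj⟩ := j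
  induction j with
  | zero => exact Nat.zero_le _
  | succ i ih =>
    have hi : i < m := Nat.lt_of_succ_lt hj
    have h1 := ih hi
    have h2 : φ ⟨i, hi⟩ < φ ⟨i + 1, hj⟩ := h (by simp [Fin.lt_def])
    have h3 := (Fin.lt_def).mp h2
    have e1 : ((⟨i, hi⟩ : Fin m) : ℕ) = i := rfl
    have e2 : ((⟨i + 1, hj⟩ : Fin m) : ℕ) = i + 1 := rfl
    omega

lemma sortDesc_antitone {n : ℕ} (p : Fin n → ℝ) : Antitone (sortDesc p) := by
  intro i j hij
  exact Tuple.monotone_sort p (Fin.rev_le_rev.mpr hij)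

/-- Sum over any set of cardinality `≤ k` of an antitone nonneg function is at most the
sum over the first `k` indices. -/
lemma sum_antitone_le {n k : ℕ} (f : Fin n → ℝ) (hf : Antitone f) (hf0 : ∀ i, 0 ≤ f i)
    (S : Finset (Fin n)) (hS : S.card ≤ k) :
    ∑ i ∈ S, f i ≤ ∑ i ∈ Finset.univ.filter (fun i : Fin n => (i : ℕ) < k), f i := by
  set m := S.card with hm
  have hmn : m ≤ n := by
    simpa using Finset.card_le_card (Finset.subset_univ S)
  have himg : Finset.univ.image (S.orderEmbOfFin rfl) = S := by
    apply Finset.eq_of_subset_of_card_le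
    · intro x hx
      simp only [Finset.mem_image] at hx
      obtain ⟨j, -, rfl⟩ := hx
      exact S.orderEmbOfFin_mem rfl j
    · rw [Finset.card_image_of_injective _ (S.orderEmbOfFin rfl).injective, Finset.card_univ,
        Fintype.card_fin]
  have h1 : ∑ i ∈ S, f i = ∑ j : Fin m, f (S.orderEmbOfFin rfl j) := by
    conv_lhs => rw [← himg]
    rw [Finset.sum_image (fun a _ b _ hab => (S.orderEmbOfFin rfl).injective hab)]
  rw [h1]
  have h2 : ∀ j : Fin m, f (S.orderEmbOfFin rfl j) ≤ f (Fin.castLE hmn j) := by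
    intro j
    apply hf
    have := strictMono_le_apply (S.orderEmbOfFin rfl).strictMono j
    exact Fin.le_def.mpr (by simpa using this)
  calc ∑ j : Fin m, f (S.orderEmbOfFin rfl j)
      ≤ ∑ j : Fin m, f (Fin.castLE hmn j) := Finset.sum_le_sum fun j _ => h2 j
    _ = ∑ i ∈ Finset.univ.filter (fun i : Fin n => (i : ℕ) < m), f i := by
        rw [← Finset.sum_image (f := f) (g := fun j : Fin m => Fin.castLE hmn j)
          (fun a _ b _ hab => Fin.castLE_injective hmn hab)]
        congr 1
        ext x
        simp only [Finset.mem_image, Finset.mem_filter, Finset.mem_univ, true_and]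
        constructor
        · rintro ⟨j, -, rfl⟩; exact j.2
        · intro hx; exact ⟨⟨(x : ℕ), hx⟩, by simp [Fin.ext_iff]⟩
    _ ≤ ∑ i ∈ Finset.univ.filter (fun i : Fin n => (i : ℕ) < k), f i := by
        apply Finset.sum_le_sum_of_subset_of_nonneg
        · intro x hx
          simp only [Finset.mem_filter, Finset.mem_univ, true_and] at hx ⊢
          omega
        · intro i _ _; exact hf0 i

/-- Any sum over a set of cardinality ≤ k of a nonneg vector is at most `partialSum p k`. -/
lemma sum_le_partialSum {n k : ℕ} (p : Fin n → ℝ) (hp : ∀ i, 0 ≤ p i)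
    (S : Finset (Fin n)) (hS : S.card ≤ k) : ∑ i ∈ S, p i ≤ partialSum p k := by
  set g : Equiv.Perm (Fin n) := (Fin.revPerm.trans (Tuple.sort p)) with hg
  have hgd : ∀ i, sortDesc p i = p (g i) := fun i => rfl
  have h1 : ∑ i ∈ S, p i = ∑ j ∈ S.image g.symm, sortDesc p j := by
    rw [Finset.sum_image (fun a _ b _ hab => g.symm.injective hab)]
    apply Finset.sum_congr rfl
    intro i _
    rw [hgd, Equiv.apply_symm_apply]
  rw [h1]
  exact sum_antitone_le (sortDesc p) (sortDesc_antitone p) (fun i => hp _)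
    _ (le_trans Finset.card_image_le hS)

/-- `partialSum p k` is achieved as the sum over some set of cardinality ≤ k. -/
lemma partialSum_eq_sum {n k : ℕ} (p : Fin n → ℝ) :
    ∃ S : Finset (Fin n), S.card ≤ k ∧ partialSum p k = ∑ i ∈ S, p i := by
  set g : Equiv.Perm (Fin n) := (Fin.revPerm.trans (Tuple.sort p)) with hg
  set F := Finset.univ.filter (fun i : Fin n => (i : ℕ) < k) with hF
  refine ⟨F.image g, ?_, ?_⟩
  · refine le_trans Finset.card_image_le ?_
    refine le_trans (Finset.card_le_card_of_injOn Fin.val (fun x hx => ?_)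
      (fun a _ b _ hab => Fin.val_injective hab)) (by simp : (Finset.range k).card ≤ k)
    simp only [hF, Finset.mem_filter, Finset.mem_univ, true_and] at hx
    simpa using hx
  · rw [Finset.sum_image (fun a _ b _ hab => g.injective hab)]
    rfl

lemma padVec_castLE {d m : ℕ} (p : Fin d → ℝ) (h : d ≤ m) (i : Fin d) :
    padVec (m := m) p (Fin.castLE h i) = p i := by
  have hi : ((Fin.castLE h i : Fin m) : ℕ) < d := i.isLt
  simp only [padVec, dif_pos hi]
  exact congrArg p (Fin.ext rfl)

lemma sum_padVec {d m : ℕ} (p : Fin d → ℝ) (h : d ≤ m) :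
    ∑ i : Fin m, padVec (m := m) p i = ∑ i : Fin d, p i := by
  have h1 : ∑ i ∈ Finset.univ.image (Fin.castLE h), padVec (m := m) p i
      = ∑ i : Fin m, padVec (m := m) p i := by
    apply Finset.sum_subset (Finset.subset_univ _)
    intro x _ hx
    simp only [Finset.mem_image, Finset.mem_univ, true_and] at hx
    have hxd : ¬ (x : ℕ) < d := fun hlt => hx ⟨⟨(x : ℕ), hlt⟩, by simp [Fin.ext_iff]⟩
    simp [padVec, hxd]
  rw [← h1, Finset.sum_image (fun a _ b _ hab => Fin.castLE_injective h hab)]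
  exact Finset.sum_congr rfl fun i _ => padVec_castLE p h i

/-- for probability vectors `p`, `q`, the tensor product `p ⊗ q` is
majorized by `p` (padded with zeros to dimension `d * e`). -/
theorem tensor_majorizedBy_factor {d e : ℕ} (p : Fin d → ℝ) (q : Fin e → ℝ)
    (hp : IsProbVec p) (hq : IsProbVec q) :
    MajorizedBy (tensorVec p q) (padVec p) := by
  have he : 0 < e := by
    rcases Nat.eq_zero_or_pos e with rfl | he
    · exact absurd hq.2 (by simp)
    · exact he
  have hde : d ≤ d * e := Nat.le_mul_of_pos_right d he
  have hpad0 : ∀ i : Fin (d * e), 0 ≤ padVec (m := d * e) p i := by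
    intro i; unfold padVec; split
    · exact hp.1 _
    · exact le_refl 0
  constructor
  · intro k
    obtain ⟨S, hScard, hSeq⟩ := partialSum_eq_sum (tensorVec p q) (k := k)
    rw [hSeq]
    set π : Fin (d * e) → Fin d := fun s => (finProdFinEquiv.symm s).1 with hπ
    set T := S.image π with hT
    have step1 : ∑ s ∈ S, tensorVec p q s ≤ ∑ i ∈ T, p i := by
      rw [← Finset.sum_fiberwise_of_maps_to (g := π)
        (fun x hx => Finset.mem_image_of_mem π hx) (tensorVec p q)]
      apply Finset.sum_le_sum
      intro i hi
      have hfib : ∑ s ∈ S.filter (fun s => π s = i), tensorVec p q s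
          = p i * ∑ s ∈ S.filter (fun s => π s = i), q (finProdFinEquiv.symm s).2 := by
        rw [Finset.mul_sum]
        apply Finset.sum_congr rfl
        intro s hs
        simp only [Finset.mem_filter] at hs
        rw [tensorVec, ← hs.2]
      rw [hfib]
      have hqsum : ∑ s ∈ S.filter (fun s => π s = i), q (finProdFinEquiv.symm s).2 ≤ 1 := by
        have hinj : ∀ a ∈ S.filter (fun s => π s = i), ∀ b ∈ S.filter (fun s => π s = i),
            (finProdFinEquiv.symm a).2 = (finProdFinEquiv.symm b).2 → a = b := by
          intro a ha b hb hab
          simp only [Finset.mem_filter] at ha hb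
          apply finProdFinEquiv.symm.injective
          exact Prod.ext (ha.2.trans hb.2.symm) hab
        rw [← Finset.sum_image (f := q) hinj]
        calc ∑ j ∈ (S.filter (fun s => π s = i)).image (fun s => (finProdFinEquiv.symm s).2), q j
            ≤ ∑ j : Fin e, q j := Finset.sum_le_sum_of_subset_of_nonneg
              (Finset.subset_univ _) (fun j _ _ => hq.1 j)
          _ = 1 := hq.2
      calc p i * ∑ s ∈ S.filter (fun s => π s = i), q (finProdFinEquiv.symm s).2
          ≤ p i * 1 := mul_le_mul_of_nonneg_left hqsum (hp.1 i)
        _ = p i := mul_one _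
    have hTcard : (T.image (Fin.castLE hde)).card ≤ k :=
      le_trans Finset.card_image_le (le_trans Finset.card_image_le hScard)
    have step2 : ∑ i ∈ T, p i = ∑ i ∈ T.image (Fin.castLE hde), padVec (m := d * e) p i := by
      rw [Finset.sum_image (fun a _ b _ hab => Fin.castLE_injective hde hab)]
      exact (Finset.sum_congr rfl fun i _ => padVec_castLE p hde i).symm
    calc ∑ s ∈ S, tensorVec p q s ≤ ∑ i ∈ T, p i := step1
      _ = ∑ i ∈ T.image (Fin.castLE hde), padVec (m := d * e) p i := step2
      _ ≤ partialSum (padVec p) k := sum_le_partialSum _ hpad0 _ hTcard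
  · have h1 : ∑ s, tensorVec p q s = ∑ x : Fin d × Fin e, p x.1 * q x.2 := by
      rw [← Equiv.sum_comp finProdFinEquiv (tensorVec p q)]
      apply Finset.sum_congr rfl
      intro x _
      simp [tensorVec]
    rw [h1, Fintype.sum_prod_type]
    simp only [← Finset.mul_sum, hq.2, mul_one]
    exact (sum_padVec p hde).symm
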